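/- On e(3)*, the two Clebsch Hamiltonians I₁ = (1/2)⟨m,m⟩ - (1/2)⟨a, B₁a⟩ and I₂ = (1/2)⟨m, Am⟩ - (1/2)⟨a, B₂a⟩, with B₁ = diag(0, k², k² - 1), B₂ = diag(0, 0, k² - 1), A = diag(1 - k², 1, 0) for a real parameter k, are in involution with respect to the e(3)* Lie–Poisson bracket: {I₁, I₂} = 0. -/

import Mathlib

/-!
Both Hamiltonians are diagonal quadratic forms `½⟨m, diag c · m⟩ - ½⟨a, diag d · a⟩`, whose
gradients are linear: `∇_m = c ⊙ m` and `∇_a = -(d ⊙ a)`. The bracket is therefore a cubic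
polynomial in `(m, a)`; for `I₁` the pure-`m` term vanishes since `c = 1`, and the two mixed terms
are `±(k² - 1) a₃ (a₁ m₂ - a₂ m₁)`, which cancel.
-/

open Matrix

/-- Gradient with respect to the variable `m`. -/
noncomputable def gradM (F : (Fin 3 → ℝ) × (Fin 3 → ℝ) → ℝ)
    (z : (Fin 3 → ℝ) × (Fin 3 → ℝ)) : Fin 3 → ℝ :=
  fun α => fderiv ℝ F z (Pi.single α 1, 0)

/-- Gradient with respect to the variable `a`. -/
noncomputable def gradA (F : (Fin 3 → ℝ) × (Fin 3 → ℝ) → ℝ)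
    (z : (Fin 3 → ℝ) × (Fin 3 → ℝ)) : Fin 3 → ℝ :=
  fun α => fderiv ℝ F z (0, Pi.single α 1)

/-- The `e(3)*` Lie–Poisson bracket on `ℝ³ × ℝ³` (variables `(m, a)`). -/
noncomputable def e3Bracket (F G : (Fin 3 → ℝ) × (Fin 3 → ℝ) → ℝ)
    (z : (Fin 3 → ℝ) × (Fin 3 → ℝ)) : ℝ :=
  -(z.1 ⬝ᵥ (gradM F z ⨯₃ gradM G z)) - z.2 ⬝ᵥ (gradM F z ⨯₃ gradA G z) -
    z.2 ⬝ᵥ (gradA F z ⨯₃ gradM G z)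

section DiagonalQuadraticForm

variable {n : Type*} [Fintype n]

theorem dotProduct_diagonal_mulVec_self {R : Type*} [CommSemiring R] [DecidableEq n]
    (c y : n → R) : y ⬝ᵥ (diagonal c *ᵥ y) = ∑ i, c i * y i ^ 2 :=
  Finset.sum_congr rfl fun i _ => by rw [mulVec_diagonal]; ring

theorem hasFDerivAt_sum_mul_sq {𝕜 : Type*} [NontriviallyNormedField 𝕜] (c x : n → 𝕜) :
    HasFDerivAt (fun y : n → 𝕜 => ∑ i, c i * y i ^ 2)
      (∑ i, (2 * c i * x i) • (ContinuousLinearMap.proj i : (n → 𝕜) →L[𝕜] 𝕜)) x := by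
  refine HasFDerivAt.fun_sum fun i _ => ?_
  have hi : HasFDerivAt (fun y : n → 𝕜 => y i) (ContinuousLinearMap.proj i : (n → 𝕜) →L[𝕜] 𝕜) x :=
    hasFDerivAt_apply i x
  refine ((hi.pow 2).const_mul (c i)).congr_fderiv ?_
  rw [smul_smul, Nat.add_one_sub_one, pow_one, nsmul_eq_mul, Nat.cast_ofNat]
  ring_nf

variable [DecidableEq n]

noncomputable def diagHamiltonian (c d : n → ℝ) : (n → ℝ) × (n → ℝ) → ℝ :=
  fun z => (1 / 2 : ℝ) * (z.1 ⬝ᵥ (diagonal c *ᵥ z.1)) - (1 / 2 : ℝ) * (z.2 ⬝ᵥ (diagonal d *ᵥ z.2))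

theorem fderiv_diagHamiltonian_apply (c d : n → ℝ) (z v : (n → ℝ) × (n → ℝ)) :
    fderiv ℝ (diagHamiltonian c d) z v = (c * z.1) ⬝ᵥ v.1 - (d * z.2) ⬝ᵥ v.2 := by
  have hm : HasFDerivAt (fun w : (n → ℝ) × (n → ℝ) => ∑ i, c i * w.1 i ^ 2) _ z :=
    (hasFDerivAt_sum_mul_sq c z.1).comp z hasFDerivAt_fst
  have ha : HasFDerivAt (fun w : (n → ℝ) × (n → ℝ) => ∑ i, d i * w.2 i ^ 2) _ z :=
    (hasFDerivAt_sum_mul_sq d z.2).comp z hasFDerivAt_snd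
  have hH : diagHamiltonian c d =
      fun w => 1 / 2 * (∑ i, c i * w.1 i ^ 2) - 1 / 2 * (∑ i, d i * w.2 i ^ 2) := by
    funext w
    simp only [diagHamiltonian, dotProduct_diagonal_mulVec_self]
  rw [hH, ((hm.const_mul (1 / 2)).fun_sub (ha.const_mul (1 / 2))).fderiv]
  simp only [_root_.sub_apply, _root_.smul_apply,
    ContinuousLinearMap.comp_apply, ContinuousLinearMap.coe_fst', ContinuousLinearMap.coe_snd',
    _root_.sum_apply, ContinuousLinearMap.proj_apply, smul_eq_mul, Finset.mul_sum,
    dotProduct, Pi.mul_apply]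
  ring_nf

end DiagonalQuadraticForm

section E3Bracket

variable (c d : Fin 3 → ℝ) (z : (Fin 3 → ℝ) × (Fin 3 → ℝ))

theorem gradM_diagHamiltonian : gradM (diagHamiltonian c d) z = c * z.1 := by
  funext α
  simp [gradM, fderiv_diagHamiltonian_apply]

theorem gradA_diagHamiltonian : gradA (diagHamiltonian c d) z = -(d * z.2) := by
  funext α
  simp [gradA, fderiv_diagHamiltonian_apply]

theorem e3Bracket_diagHamiltonian (c' d' : Fin 3 → ℝ) :
    e3Bracket (diagHamiltonian c d) (diagHamiltonian c' d') z =
      -(z.1 ⬝ᵥ ((c * z.1) ⨯₃ (c' * z.1))) + z.2 ⬝ᵥ ((c * z.1) ⨯₃ (d' * z.2)) +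
        z.2 ⬝ᵥ ((d * z.2) ⨯₃ (c' * z.1)) := by
  simp only [e3Bracket, gradM_diagHamiltonian, gradA_diagHamiltonian, map_neg,
    LinearMap.neg_apply, dotProduct_neg]
  ring

end E3Bracket

/-- The Clebsch Hamiltonians `I₁ = (1/2)⟨m,m⟩ - (1/2)⟨a,B₁a⟩` and
`I₂ = (1/2)⟨m,Am⟩ - (1/2)⟨a,B₂a⟩` with `B₁ = diag(0,k²,k²-1)`,
`B₂ = diag(0,0,k²-1)`, `A = diag(1-k²,1,0)` are in involution. -/
theorem clebsch_involution (k : ℝ) (z : (Fin 3 → ℝ) × (Fin 3 → ℝ)) :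
    e3Bracket
      (fun z => (1 / 2 : ℝ) * (z.1 ⬝ᵥ z.1) -
        (1 / 2 : ℝ) * (z.2 ⬝ᵥ (Matrix.diagonal ![0, k ^ 2, k ^ 2 - 1] *ᵥ z.2)))
      (fun z => (1 / 2 : ℝ) * (z.1 ⬝ᵥ (Matrix.diagonal ![1 - k ^ 2, 1, 0] *ᵥ z.1)) -
        (1 / 2 : ℝ) * (z.2 ⬝ᵥ (Matrix.diagonal ![0, 0, k ^ 2 - 1] *ᵥ z.2)))
      z = 0 := by
  have hI₁ : (fun z : (Fin 3 → ℝ) × (Fin 3 → ℝ) => (1 / 2 : ℝ) * (z.1 ⬝ᵥ z.1) -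
      (1 / 2 : ℝ) * (z.2 ⬝ᵥ (Matrix.diagonal ![0, k ^ 2, k ^ 2 - 1] *ᵥ z.2))) =
      diagHamiltonian 1 ![0, k ^ 2, k ^ 2 - 1] := by
    funext w
    simp only [diagHamiltonian, Pi.one_def, diagonal_one, one_mulVec]
  rw [hI₁]
  change e3Bracket _ (diagHamiltonian ![1 - k ^ 2, 1, 0] ![0, 0, k ^ 2 - 1]) z = 0
  rw [e3Bracket_diagHamiltonian]
  simp only [cross_apply, dotProduct, Fin.sum_univ_three, Pi.mul_apply, Pi.one_apply, cons_val]
  ring
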